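/- Let X₁, …, X_k be real random variables, δ > 0, and C > 0 a constant with ∑_{j=1}^k P{|X_j| > δ} ≤ C. Then for every u ≥ δ: P{max_{1≤i≤k} |∑_{j=1}^i (X_j 1_{{|X_j| ≤ u}} − E[X_j 1_{{|X_j| ≤ δ}}])| > 2 C u} ≤ P{max_{1≤i≤k} |∑_{j=1}^i (g_u(X_j) − E g_u(X_j))| > C u / 2} + (4/C) ∑_{j=1}^k P{|X_j| > u}. -/

import Mathlib

open MeasureTheory Finset

/-- Truncation at level `ℓ`: `g_ℓ(x) = (x ∧ ℓ) ∨ (-ℓ)`. -/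
noncomputable def truncAt (l x : ℝ) : ℝ := max (min x l) (-l)

lemma truncAt_abs_le {l : ℝ} (hl : 0 ≤ l) (x : ℝ) : |truncAt l x| ≤ l := by
  rw [abs_le]
  refine ⟨le_max_right _ _, max_le (min_le_right _ _) (by linarith)⟩

lemma truncAt_of_abs_le {l x : ℝ} (h : |x| ≤ l) : truncAt l x = x := by
  rw [abs_le] at h
  rw [truncAt, min_eq_left h.2, max_eq_left (by linarith [h.1])]

/-- If `∑_{j=1}^k P{|X_j| > δ} ≤ C`, then for every `u ≥ δ`,
`P{max_{1≤i≤k} |∑_{j=1}^i (X_j 1_{|X_j|≤u} − E X_j 1_{|X_j|≤δ})| > 2Cu}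
  ≤ P{max_{1≤i≤k} |∑_{j=1}^i (g_u(X_j) − E g_u(X_j))| > Cu/2} + (4/C) ∑_{j=1}^k P{|X_j| > u}`. -/
theorem prob_max_truncated_partial_sum_le {Ω : Type*} [MeasurableSpace Ω]
    (μ : Measure Ω) [IsProbabilityMeasure μ]
    (k : ℕ) (hk : 1 ≤ k) (X : ℕ → Ω → ℝ) (hmeas : ∀ j ∈ Finset.Icc 1 k, Measurable (X j))
    (δ C : ℝ) (hδ : 0 < δ) (hC : 0 < C)
    (hsum : (∑ j ∈ Finset.Icc 1 k, (μ {ω | δ < |X j ω|}).toReal) ≤ C) :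
    ∀ u : ℝ, δ ≤ u →
      μ {ω | ∃ i ∈ Finset.Icc 1 k, 2 * C * u <
          |∑ j ∈ Finset.Icc 1 i,
            ((if |X j ω| ≤ u then X j ω else 0) -
              ∫ ω', (if |X j ω'| ≤ δ then X j ω' else 0) ∂μ)|}
        ≤ μ {ω | ∃ i ∈ Finset.Icc 1 k, C * u / 2 <
            |∑ j ∈ Finset.Icc 1 i, (truncAt u (X j ω) - ∫ ω', truncAt u (X j ω') ∂μ)|}
          + ENNReal.ofReal (4 / C) * ∑ j ∈ Finset.Icc 1 k, μ {ω | u < |X j ω|} := by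
  intro u hu
  have hu0 : 0 < u := lt_of_lt_of_le hδ hu
  set N : Ω → ℕ := fun ω => ((Finset.Icc 1 k).filter (fun j => u < |X j ω|)).card with hN
  -- measurability
  have hmeasY : ∀ j ∈ Finset.Icc 1 k,
      Measurable (fun ω => if |X j ω| ≤ δ then X j ω else 0) := by
    intro j hj
    exact Measurable.ite (measurableSet_le (hmeas j hj).abs measurable_const)
      (hmeas j hj) measurable_const
  have hmeasZ : ∀ j ∈ Finset.Icc 1 k, Measurable (fun ω => truncAt u (X j ω)) := by
    intro j hj
    simp only [truncAt]
    exact (((hmeas j hj).min measurable_const).max measurable_const)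
  have hsets : ∀ j ∈ Finset.Icc 1 k, MeasurableSet {ω | u < |X j ω|} := by
    intro j hj
    exact measurableSet_lt measurable_const (hmeas j hj).abs
  have hsetsδ : ∀ j ∈ Finset.Icc 1 k, MeasurableSet {ω | δ < |X j ω|} := by
    intro j hj
    exact measurableSet_lt measurable_const (hmeas j hj).abs
  -- integrability
  have hIntZ : ∀ j ∈ Finset.Icc 1 k, Integrable (fun ω => truncAt u (X j ω)) μ := by
    intro j hj
    refine (integrable_const u).mono' (hmeasZ j hj).aestronglyMeasurable ?_
    filter_upwards with ω
    simpa [Real.norm_eq_abs] using truncAt_abs_le hu0.le (X j ω)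
  have hIntY : ∀ j ∈ Finset.Icc 1 k,
      Integrable (fun ω => if |X j ω| ≤ δ then X j ω else 0) μ := by
    intro j hj
    refine (integrable_const δ).mono' (hmeasY j hj).aestronglyMeasurable ?_
    filter_upwards with ω
    by_cases h : |X j ω| ≤ δ <;> simp [h, Real.norm_eq_abs, hδ.le]
  -- centering-difference bound
  have hc : ∀ j ∈ Finset.Icc 1 k,
      |(∫ ω', truncAt u (X j ω') ∂μ) - ∫ ω', (if |X j ω'| ≤ δ then X j ω' else 0) ∂μ|
        ≤ u * (μ {ω | δ < |X j ω|}).toReal := by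
    intro j hj
    rw [← integral_sub (hIntZ j hj) (hIntY j hj)]
    have hptw : ∀ ω, |truncAt u (X j ω) - (if |X j ω| ≤ δ then X j ω else 0)|
        ≤ Set.indicator {ω | δ < |X j ω|} (fun _ => u) ω := by
      intro ω
      by_cases h : |X j ω| ≤ δ
      · rw [if_pos h, truncAt_of_abs_le (le_trans h hu), sub_self, abs_zero]
        exact Set.indicator_nonneg (fun _ _ => hu0.le) ω
      · rw [if_neg h, sub_zero, Set.indicator_of_mem (by simpa using lt_of_not_ge h)]
        exact truncAt_abs_le hu0.le _
    calc |∫ ω', (truncAt u (X j ω') - if |X j ω'| ≤ δ then X j ω' else 0) ∂μ|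
        ≤ ∫ ω', |truncAt u (X j ω') - if |X j ω'| ≤ δ then X j ω' else 0| ∂μ := by
          simpa [Real.norm_eq_abs] using
            norm_integral_le_integral_norm
              (fun ω' => truncAt u (X j ω') - if |X j ω'| ≤ δ then X j ω' else 0) (μ := μ)
      _ ≤ ∫ ω', Set.indicator {ω | δ < |X j ω|} (fun _ => u) ω' ∂μ := by
          refine integral_mono ((hIntZ j hj).sub (hIntY j hj)).abs ?_ hptw
          exact (integrable_const u).indicator (hsetsδ j hj)
      _ = u * (μ {ω | δ < |X j ω|}).toReal := by
          rw [integral_indicator_const u (hsetsδ j hj), smul_eq_mul, mul_comm, measureReal_def]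
  -- truncation-difference pointwise bound
  have ha : ∀ (j : ℕ) (ω : Ω), |(if |X j ω| ≤ u then X j ω else 0) - truncAt u (X j ω)|
      ≤ if u < |X j ω| then u else 0 := by
    intro j ω
    by_cases h : |X j ω| ≤ u
    · rw [if_pos h, truncAt_of_abs_le h, sub_self, abs_zero, if_neg (not_lt.2 h)]
    · rw [if_neg h, if_pos (lt_of_not_ge h), zero_sub, abs_neg]
      exact truncAt_abs_le hu0.le _
  -- inclusion of events
  have hsub : {ω | ∃ i ∈ Finset.Icc 1 k, 2 * C * u <
          |∑ j ∈ Finset.Icc 1 i,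
            ((if |X j ω| ≤ u then X j ω else 0) -
              ∫ ω', (if |X j ω'| ≤ δ then X j ω' else 0) ∂μ)|}
      ⊆ {ω | ∃ i ∈ Finset.Icc 1 k, C * u / 2 <
            |∑ j ∈ Finset.Icc 1 i, (truncAt u (X j ω) - ∫ ω', truncAt u (X j ω') ∂μ)|}
        ∪ {ω | C / 2 < (N ω : ℝ)} := by
    rintro ω ⟨i, hi, hSi⟩
    by_cases hT : C * u / 2 <
        |∑ j ∈ Finset.Icc 1 i, (truncAt u (X j ω) - ∫ ω', truncAt u (X j ω') ∂μ)|
    · exact Or.inl ⟨i, hi, hT⟩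
    right
    push_neg at hT
    have hik : Finset.Icc 1 i ⊆ Finset.Icc 1 k :=
      Finset.Icc_subset_Icc_right (Finset.mem_Icc.1 hi).2
    have hdecomp : ∑ j ∈ Finset.Icc 1 i,
          ((if |X j ω| ≤ u then X j ω else 0) -
            ∫ ω', (if |X j ω'| ≤ δ then X j ω' else 0) ∂μ)
        = (∑ j ∈ Finset.Icc 1 i, (truncAt u (X j ω) - ∫ ω', truncAt u (X j ω') ∂μ))
          + (∑ j ∈ Finset.Icc 1 i, ((if |X j ω| ≤ u then X j ω else 0) - truncAt u (X j ω)))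
          + (∑ j ∈ Finset.Icc 1 i,
              ((∫ ω', truncAt u (X j ω') ∂μ) -
                ∫ ω', (if |X j ω'| ≤ δ then X j ω' else 0) ∂μ)) := by
      rw [← Finset.sum_add_distrib, ← Finset.sum_add_distrib]
      exact Finset.sum_congr rfl (fun j _ => by ring)
    have hNsum : ∑ j ∈ Finset.Icc 1 k, (if u < |X j ω| then u else 0) = (N ω : ℝ) * u := by
      rw [← Finset.sum_filter, Finset.sum_const, nsmul_eq_mul, hN]
    have hasum : ∑ j ∈ Finset.Icc 1 i,
        |(if |X j ω| ≤ u then X j ω else 0) - truncAt u (X j ω)| ≤ (N ω : ℝ) * u := by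
      calc ∑ j ∈ Finset.Icc 1 i, |(if |X j ω| ≤ u then X j ω else 0) - truncAt u (X j ω)|
          ≤ ∑ j ∈ Finset.Icc 1 i, (if u < |X j ω| then u else 0) :=
            Finset.sum_le_sum (fun j _ => ha j ω)
        _ ≤ ∑ j ∈ Finset.Icc 1 k, (if u < |X j ω| then u else 0) := by
            refine Finset.sum_le_sum_of_subset_of_nonneg hik (fun j _ _ => ?_)
            split_ifs <;> simp [hu0.le]
        _ = (N ω : ℝ) * u := hNsum
    have hcsum : ∑ j ∈ Finset.Icc 1 i,
        |(∫ ω', truncAt u (X j ω') ∂μ) -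
          ∫ ω', (if |X j ω'| ≤ δ then X j ω' else 0) ∂μ| ≤ C * u := by
      calc ∑ j ∈ Finset.Icc 1 i,
            |(∫ ω', truncAt u (X j ω') ∂μ) -
              ∫ ω', (if |X j ω'| ≤ δ then X j ω' else 0) ∂μ|
          ≤ ∑ j ∈ Finset.Icc 1 k,
            |(∫ ω', truncAt u (X j ω') ∂μ) -
              ∫ ω', (if |X j ω'| ≤ δ then X j ω' else 0) ∂μ| :=
            Finset.sum_le_sum_of_subset_of_nonneg hik (fun j _ _ => abs_nonneg _)
        _ ≤ ∑ j ∈ Finset.Icc 1 k, u * (μ {ω | δ < |X j ω|}).toReal :=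
            Finset.sum_le_sum (fun j hj => hc j hj)
        _ = u * ∑ j ∈ Finset.Icc 1 k, (μ {ω | δ < |X j ω|}).toReal := by
            rw [Finset.mul_sum]
        _ ≤ u * C := mul_le_mul_of_nonneg_left hsum hu0.le
        _ = C * u := mul_comm _ _
    have habs : |∑ j ∈ Finset.Icc 1 i,
          ((if |X j ω| ≤ u then X j ω else 0) -
            ∫ ω', (if |X j ω'| ≤ δ then X j ω' else 0) ∂μ)|
        ≤ |∑ j ∈ Finset.Icc 1 i, (truncAt u (X j ω) - ∫ ω', truncAt u (X j ω') ∂μ)|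
          + (N ω : ℝ) * u + C * u := by
      rw [hdecomp]
      refine le_trans (abs_add_le _ _) ?_
      refine le_trans (add_le_add_left (abs_add_le _ _) _) ?_
      gcongr
      · exact le_trans (Finset.abs_sum_le_sum_abs _ _) hasum
      · exact le_trans (Finset.abs_sum_le_sum_abs _ _) hcsum
    have hfin : 2 * C * u < C * u / 2 + (N ω : ℝ) * u + C * u :=
      lt_of_lt_of_le hSi (le_trans habs (by linarith))
    have : C / 2 < (N ω : ℝ) := by nlinarith
    exact this
  -- Markov bound
  have hMarkov : μ {ω | C / 2 < (N ω : ℝ)}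
      ≤ ENNReal.ofReal (4 / C) * ∑ j ∈ Finset.Icc 1 k, μ {ω | u < |X j ω|} := by
    set f : Ω → ENNReal :=
      fun ω => ∑ j ∈ Finset.Icc 1 k, Set.indicator {ω | u < |X j ω|} (fun _ => 1) ω with hf
    have hfmeas : Measurable f := by
      apply Finset.measurable_sum
      intro j hj
      exact measurable_const.indicator (hsets j hj)
    have hfval : ∀ ω, f ω = (N ω : ENNReal) := by
      intro ω
      simp only [hf, Set.indicator_apply, Set.mem_setOf_eq, hN]
      rw [Finset.sum_boole]
    have hlint : ∫⁻ ω, f ω ∂μ = ∑ j ∈ Finset.Icc 1 k, μ {ω | u < |X j ω|} := by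
      rw [hf, lintegral_finset_sum _ (fun j hj => measurable_const.indicator (hsets j hj))]
      exact Finset.sum_congr rfl (fun j hj => lintegral_indicator_one (hsets j hj))
    have hC2 : ENNReal.ofReal (C / 2) ≠ 0 := by
      simp only [ne_eq, ENNReal.ofReal_eq_zero, not_le]
      linarith
    have hsub2 : {ω | C / 2 < (N ω : ℝ)} ⊆ {ω | ENNReal.ofReal (C / 2) ≤ f ω} := by
      intro ω hω
      rw [Set.mem_setOf_eq, hfval]
      calc ENNReal.ofReal (C / 2) ≤ ENNReal.ofReal (N ω : ℝ) :=
            ENNReal.ofReal_le_ofReal (le_of_lt hω)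
        _ = (N ω : ENNReal) := ENNReal.ofReal_natCast _
    have hmkv := mul_meas_ge_le_lintegral₀ (μ := μ) hfmeas.aemeasurable (ENNReal.ofReal (C / 2))
    have hinv : (ENNReal.ofReal (C / 2))⁻¹ ≤ ENNReal.ofReal (4 / C) := by
      rw [← ENNReal.ofReal_inv_of_pos (by linarith)]
      refine ENNReal.ofReal_le_ofReal ?_
      rw [inv_div]
      gcongr
      norm_num
    calc μ {ω | C / 2 < (N ω : ℝ)} ≤ μ {ω | ENNReal.ofReal (C / 2) ≤ f ω} :=
          measure_mono hsub2
      _ = (ENNReal.ofReal (C / 2))⁻¹ *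
          (ENNReal.ofReal (C / 2) * μ {ω | ENNReal.ofReal (C / 2) ≤ f ω}) := by
          rw [← mul_assoc, ENNReal.inv_mul_cancel hC2 ENNReal.ofReal_ne_top, one_mul]
      _ ≤ (ENNReal.ofReal (C / 2))⁻¹ * ∫⁻ ω, f ω ∂μ := mul_le_mul_right hmkv _
      _ = (ENNReal.ofReal (C / 2))⁻¹ * ∑ j ∈ Finset.Icc 1 k, μ {ω | u < |X j ω|} := by
          rw [hlint]
      _ ≤ ENNReal.ofReal (4 / C) * ∑ j ∈ Finset.Icc 1 k, μ {ω | u < |X j ω|} :=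
          mul_le_mul_left hinv _
  calc μ {ω | ∃ i ∈ Finset.Icc 1 k, 2 * C * u <
          |∑ j ∈ Finset.Icc 1 i,
            ((if |X j ω| ≤ u then X j ω else 0) -
              ∫ ω', (if |X j ω'| ≤ δ then X j ω' else 0) ∂μ)|}
      ≤ μ ({ω | ∃ i ∈ Finset.Icc 1 k, C * u / 2 <
            |∑ j ∈ Finset.Icc 1 i, (truncAt u (X j ω) - ∫ ω', truncAt u (X j ω') ∂μ)|}
          ∪ {ω | C / 2 < (N ω : ℝ)}) := measure_mono hsub
    _ ≤ μ {ω | ∃ i ∈ Finset.Icc 1 k, C * u / 2 <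
            |∑ j ∈ Finset.Icc 1 i, (truncAt u (X j ω) - ∫ ω', truncAt u (X j ω') ∂μ)|}
          + μ {ω | C / 2 < (N ω : ℝ)} := measure_union_le _ _
    _ ≤ _ := add_le_add le_rfl hMarkov
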